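/- The fractional chromatic number of the Moser spindle equals 7/2. -/
import Mathlib


open Finset

attribute [local instance] Classical.propDecidable

/-- The Moser spindle as an abstract graph on 7 vertices: vertex `0` is the common hub,
`1,2,3` and `4,5,6` are the two unit rhombi (`3` and `6` the far tips, joined by the
tip edge), edges corresponding exactly to the 11 unit distances. -/
def moserSpindle : SimpleGraph (Fin 7) :=
  SimpleGraph.fromRel (fun i j =>
    (i, j) ∈ ([(0,1), (0,2), (1,2), (1,3), (2,3),
               (0,4), (0,5), (4,5), (4,6), (5,6), (3,6)] : List (Fin 7 × Fin 7)))

/-- The fractional chromatic number of a finite graph: the minimum total weight of a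
nonnegative weighting of the independent sets covering every vertex with weight ≥ 1. -/
noncomputable def fracChromNum {V : Type*} [Fintype V] (G : SimpleGraph V) : ℝ :=
  sInf {w : ℝ | ∃ γ : Finset V → ℝ,
    (∀ S, 0 ≤ γ S) ∧
    (∀ S : Finset V, ¬ (∀ x ∈ S, ∀ y ∈ S, ¬ G.Adj x y) → γ S = 0) ∧
    (∀ x : V, 1 ≤ ∑ S ∈ univ.filter
      (fun S : Finset V => x ∈ S ∧ ∀ a ∈ S, ∀ b ∈ S, ¬ G.Adj a b), γ S) ∧
    w = ∑ S : Finset V, γ S}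

instance moserDec : DecidableRel moserSpindle.Adj := fun a b =>
  decidable_of_iff _ (SimpleGraph.fromRel_adj _ a b).symm

set_option maxRecDepth 10000 in
lemma moser_indep_le_two :
    ∀ S : Finset (Fin 7), (∀ x ∈ S, ∀ y ∈ S, ¬ moserSpindle.Adj x y) → S.card ≤ 2 := by
  decide

/-- The 7 pairs forming a 7-cycle in the complement. -/
def moserCycle : Finset (Finset (Fin 7)) :=
  {({0,3} : Finset (Fin 7)), {3,5}, {1,5}, {1,4}, {2,4}, {2,6}, {0,6}}

set_option maxRecDepth 100000 in
lemma moserCycle_indep :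
    ∀ S ∈ moserCycle, ∀ a ∈ S, ∀ b ∈ S, ¬ moserSpindle.Adj a b := by
  decide

lemma moserCycle_card : moserCycle.card = 7 := by decide

set_option maxRecDepth 100000 in
lemma moserCycle_cover : ∀ x : Fin 7, ∃ S1 ∈ moserCycle, ∃ S2 ∈ moserCycle,
    S1 ≠ S2 ∧ x ∈ S1 ∧ x ∈ S2 := by decide

lemma moser_mem : (7 / 2 : ℝ) ∈ {w : ℝ | ∃ γ : Finset (Fin 7) → ℝ,
    (∀ S, 0 ≤ γ S) ∧
    (∀ S : Finset (Fin 7), ¬ (∀ x ∈ S, ∀ y ∈ S, ¬ moserSpindle.Adj x y) → γ S = 0) ∧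
    (∀ x : Fin 7, 1 ≤ ∑ S ∈ univ.filter
      (fun S : Finset (Fin 7) => x ∈ S ∧ ∀ a ∈ S, ∀ b ∈ S, ¬ moserSpindle.Adj a b), γ S) ∧
    (7 / 2 : ℝ) = ∑ S : Finset (Fin 7), γ S} := by
  classical
  refine ⟨fun S => if S ∈ moserCycle then 1/2 else 0, ?_, ?_, ?_, ?_⟩
  · intro S; by_cases h : S ∈ moserCycle <;> simp [h]
  · intro S hS
    by_cases h : S ∈ moserCycle
    · exact absurd (moserCycle_indep S h) hS
    · simp [h]
  · intro x
    obtain ⟨S1, hS1, S2, hS2, hne, hx1, hx2⟩ := moserCycle_cover x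
    have hsub : ({S1, S2} : Finset (Finset (Fin 7))) ⊆ univ.filter
        (fun S : Finset (Fin 7) => x ∈ S ∧ ∀ a ∈ S, ∀ b ∈ S, ¬ moserSpindle.Adj a b) := by
      intro S hS
      simp only [Finset.mem_insert, Finset.mem_singleton] at hS
      rcases hS with rfl | rfl
      · exact Finset.mem_filter.2 ⟨Finset.mem_univ _, hx1, moserCycle_indep _ hS1⟩
      · exact Finset.mem_filter.2 ⟨Finset.mem_univ _, hx2, moserCycle_indep _ hS2⟩
    have hle := Finset.sum_le_sum_of_subset_of_nonneg
      (f := fun S => if S ∈ moserCycle then (1/2 : ℝ) else 0) hsub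
      (fun S _ _ => by by_cases h : S ∈ moserCycle <;> simp [h])
    refine le_trans ?_ hle
    rw [Finset.sum_pair hne]
    simp only [if_pos hS1, if_pos hS2]
    norm_num
  · have : ∑ S : Finset (Fin 7), (if S ∈ moserCycle then (1/2 : ℝ) else 0)
        = ∑ S ∈ univ ∩ moserCycle, (1/2 : ℝ) := Finset.sum_ite_mem _ _ _
    rw [this, Finset.univ_inter, Finset.sum_const, moserCycle_card]
    norm_num

lemma moser_lb : ∀ w ∈ {w : ℝ | ∃ γ : Finset (Fin 7) → ℝ,
    (∀ S, 0 ≤ γ S) ∧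
    (∀ S : Finset (Fin 7), ¬ (∀ x ∈ S, ∀ y ∈ S, ¬ moserSpindle.Adj x y) → γ S = 0) ∧
    (∀ x : Fin 7, 1 ≤ ∑ S ∈ univ.filter
      (fun S : Finset (Fin 7) => x ∈ S ∧ ∀ a ∈ S, ∀ b ∈ S, ¬ moserSpindle.Adj a b), γ S) ∧
    w = ∑ S : Finset (Fin 7), γ S},
    (7 / 2 : ℝ) ≤ w := by
  classical
  rintro w ⟨γ, hnn, hz, hcov, rfl⟩
  have h7 : (7 : ℝ) ≤ ∑ x : Fin 7, ∑ S ∈ univ.filter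
      (fun S : Finset (Fin 7) => x ∈ S ∧ ∀ a ∈ S, ∀ b ∈ S, ¬ moserSpindle.Adj a b), γ S := by
    calc (7 : ℝ) = ∑ _x : Fin 7, 1 := by simp
    _ ≤ _ := Finset.sum_le_sum fun x _ => hcov x
  have hswap : ∑ x : Fin 7, ∑ S ∈ univ.filter
      (fun S : Finset (Fin 7) => x ∈ S ∧ ∀ a ∈ S, ∀ b ∈ S, ¬ moserSpindle.Adj a b), γ S
      = ∑ S : Finset (Fin 7), ∑ x : Fin 7,
        (if x ∈ S ∧ ∀ a ∈ S, ∀ b ∈ S, ¬ moserSpindle.Adj a b then γ S else 0) := by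
    rw [← Finset.sum_comm]
    exact Finset.sum_congr rfl fun x _ => Finset.sum_filter _ _
  have hbound : ∀ S : Finset (Fin 7), ∑ x : Fin 7,
      (if x ∈ S ∧ ∀ a ∈ S, ∀ b ∈ S, ¬ moserSpindle.Adj a b then γ S else 0) ≤ 2 * γ S := by
    intro S
    by_cases hind : ∀ a ∈ S, ∀ b ∈ S, ¬ moserSpindle.Adj a b
    · have heq : ∑ x : Fin 7, (if x ∈ S ∧ ∀ a ∈ S, ∀ b ∈ S, ¬ moserSpindle.Adj a b
          then γ S else 0) = ∑ x : Fin 7, (if x ∈ S then γ S else 0) := by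
        refine Finset.sum_congr rfl fun x _ => ?_
        by_cases hx : x ∈ S
        · rw [if_pos ⟨hx, hind⟩, if_pos hx]
        · rw [if_neg (fun h => hx h.1), if_neg hx]
      have heq2 : ∑ x : Fin 7, (if x ∈ S then γ S else 0)
          = ∑ x ∈ univ ∩ S, γ S := Finset.sum_ite_mem _ _ _
      rw [heq, heq2, Finset.univ_inter, Finset.sum_const, nsmul_eq_mul]
      have h2 : ((S.card : ℕ) : ℝ) ≤ 2 := by
        exact_mod_cast moser_indep_le_two S hind
      have := hnn S
      nlinarith
    · have hz' := hz S hind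
      have heq : ∑ x : Fin 7, (if x ∈ S ∧ ∀ a ∈ S, ∀ b ∈ S, ¬ moserSpindle.Adj a b
          then γ S else 0) = 0 := by
        refine Finset.sum_eq_zero fun x _ => ?_
        rw [if_neg (fun h => hind h.2)]
      rw [heq, hz']; norm_num
  have hsum : (7 : ℝ) ≤ ∑ S : Finset (Fin 7), 2 * γ S := by
    calc (7 : ℝ) ≤ _ := h7
    _ = _ := hswap
    _ ≤ _ := Finset.sum_le_sum fun S _ => hbound S
  rw [← Finset.mul_sum] at hsum
  linarith

/-- the fractional chromatic number of the Moser spindle is `7/2`. -/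
theorem stmt_8 : fracChromNum moserSpindle = 7 / 2 := by
  unfold fracChromNum
  have bridge : ∀ (γ : Finset (Fin 7) → ℝ) (x : Fin 7)
      (i1 i2 : DecidablePred (fun S : Finset (Fin 7) =>
        x ∈ S ∧ ∀ a ∈ S, ∀ b ∈ S, ¬ moserSpindle.Adj a b)),
      ∑ S ∈ @filter _ _ i1 univ, γ S = ∑ S ∈ @filter _ _ i2 univ, γ S := by
    intro γ x i1 i2
    congr 1
    ext S
    simp [Finset.mem_filter]
  refine le_antisymm (csInf_le ⟨7/2, fun w hw => ?_⟩ ?_) (le_csInf ⟨7/2, ?_⟩ fun w hw => ?_)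
  · obtain ⟨γ, h1, h2, h3, h4⟩ := hw
    refine moser_lb w ⟨γ, h1, h2, fun x => le_trans (h3 x) (le_of_eq (bridge γ x _ _)), h4⟩
  · obtain ⟨γ, h1, h2, h3, h4⟩ := moser_mem
    exact ⟨γ, h1, h2, fun x => le_trans (h3 x) (le_of_eq (bridge γ x _ _)), h4⟩
  · obtain ⟨γ, h1, h2, h3, h4⟩ := moser_mem
    exact ⟨γ, h1, h2, fun x => le_trans (h3 x) (le_of_eq (bridge γ x _ _)), h4⟩
  · obtain ⟨γ, h1, h2, h3, h4⟩ := hw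
    refine moser_lb w ⟨γ, h1, h2, fun x => le_trans (h3 x) (le_of_eq (bridge γ x _ _)), h4⟩
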